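/- Consider a graph with a closed swivel: nodes 1 and 2 are connected to node 3 with coupling α > 0, connected to each other with coupling β ≥ 0, and not connected to any other node. Then λ = -α - 2β is an eigenvalue of the graph Laplacian G, with eigenvector x satisfying x_1 = 1, x_2 = -1, and x_i = 0 for i ≥ 3. In particular the swivel node 3 is a soft node for this eigenvalue. -/
import Mathlib


open Matrix Finset

/-- A closed swivel: leaves `a`, `b` attached to the swivel `c` with coupling `α > 0`,
connected to each other with coupling `β ≥ 0`, and not connected to any other node.
Then `-α - 2β` is an eigenvalue of the graph Laplacian, with eigenvector `x a = 1`,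
`x b = -1`, `x i = 0` otherwise; in particular the swivel `c` is a soft node. -/
theorem closed_swivel_soft_node (n : ℕ) (M : Matrix (Fin n) (Fin n) ℝ)
    (hM : M.IsSymm) (hdiag : ∀ i, M i i = 0)
    (a b c : Fin n) (hab : a ≠ b) (hac : a ≠ c) (hbc : b ≠ c)
    (α β : ℝ) (hα : 0 < α) (hβ : 0 ≤ β)
    (hac' : M a c = α) (hbc' : M b c = α) (hab' : M a b = β)
    (haleaf : ∀ j, j ≠ b → j ≠ c → M a j = 0)
    (hbleaf : ∀ j, j ≠ a → j ≠ c → M b j = 0) :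
    (-(Matrix.diagonal fun i => ∑ j, M i j) + M).mulVec
        (fun i => if i = a then 1 else if i = b then -1 else 0) =
      (-α - 2 * β) • (fun i => if i = a then (1:ℝ) else if i = b then -1 else 0) ∧
    (if c = a then (1:ℝ) else if c = b then -1 else 0) = 0 := by
  have hsym : ∀ i j, M i j = M j i := fun i j => by
    have := congrFun (congrFun hM j) i
    simpa [Matrix.transpose_apply] using this
  have hba' : M b a = β := by rw [hsym b a, hab']
  -- row sums for a and b
  have hsa : ∑ j, M a j = α + β := by
    rw [show (univ : Finset (Fin n)) = insert b (insert c (univ \ {b, c})) by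
      ext j; by_cases hb : j = b <;> by_cases hc : j = c <;> simp [hb, hc, hbc]]
    rw [Finset.sum_insert (by simp [hbc]), Finset.sum_insert (by simp)]
    have : ∑ j ∈ univ \ {b, c}, M a j = 0 := by
      apply Finset.sum_eq_zero
      intro j hj
      simp only [Finset.mem_sdiff, Finset.mem_insert, Finset.mem_singleton] at hj
      exact haleaf j (fun h => hj.2 (Or.inl h)) (fun h => hj.2 (Or.inr h))
    rw [this, hab', hac']; ring
  have hsb : ∑ j, M b j = α + β := by
    rw [show (univ : Finset (Fin n)) = insert a (insert c (univ \ {a, c})) by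
      ext j; by_cases ha : j = a <;> by_cases hc : j = c <;> simp [ha, hc, hac]]
    rw [Finset.sum_insert (by simp [hac]), Finset.sum_insert (by simp)]
    have : ∑ j ∈ univ \ {a, c}, M b j = 0 := by
      apply Finset.sum_eq_zero
      intro j hj
      simp only [Finset.mem_sdiff, Finset.mem_insert, Finset.mem_singleton] at hj
      exact hbleaf j (fun h => hj.2 (Or.inl h)) (fun h => hj.2 (Or.inr h))
    rw [this, hba', hbc']; ring
  -- the dot product with x
  have hdot : ∀ i, (∑ j, M i j * (if j = a then (1:ℝ) else if j = b then -1 else 0))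
      = M i a - M i b := by
    intro i
    rw [show (univ : Finset (Fin n)) = insert a (insert b (univ \ {a, b})) by
      ext j; by_cases ha : j = a <;> by_cases hb : j = b <;> simp [ha, hb, hab]]
    rw [Finset.sum_insert (by simp [hab]), Finset.sum_insert (by simp)]
    have : ∑ j ∈ univ \ {a, b}, M i j * (if j = a then (1:ℝ) else if j = b then -1 else 0) = 0 := by
      apply Finset.sum_eq_zero
      intro j hj
      simp only [Finset.mem_sdiff, Finset.mem_insert, Finset.mem_singleton] at hj
      have h1 : j ≠ a := fun h => hj.2 (Or.inl h)
      have h2 : j ≠ b := fun h => hj.2 (Or.inr h)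
      simp [h1, h2]
    rw [this]
    simp [hab, Ne.symm hab]
    ring
  constructor
  · funext i
    simp only [Matrix.mulVec, dotProduct, Pi.add_apply, Pi.neg_apply,
      Matrix.neg_apply, Matrix.add_apply, Pi.smul_apply, smul_eq_mul]
    simp only [add_mul, neg_mul]
    rw [Finset.sum_add_distrib, hdot]
    have hD : ∑ x, -(Matrix.diagonal (fun i => ∑ j, M i j) i x
        * (if x = a then (1:ℝ) else if x = b then -1 else 0))
        = -((∑ j, M i j) * (if i = a then (1:ℝ) else if i = b then -1 else 0)) := by
      rw [show (∑ x, -(Matrix.diagonal (fun i => ∑ j, M i j) i x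
          * (if x = a then (1:ℝ) else if x = b then -1 else 0)))
          = -∑ x, Matrix.diagonal (fun i => ∑ j, M i j) i x
          * (if x = a then (1:ℝ) else if x = b then -1 else 0) by rw [Finset.sum_neg_distrib]]
      congr 1
      rw [Finset.sum_eq_single i (fun x _ hx => by simp [Matrix.diagonal_apply, Ne.symm hx])
        (by simp)]
      simp [Matrix.diagonal_apply]
    rw [hD]
    by_cases hia : i = a
    · subst hia; simp [hab, hsa, hab', hdiag]; ring
    · by_cases hib : i = b
      · subst hib; simp [Ne.symm hab, hsb, hba', hdiag]; ring
      · simp only [hia, hib, if_false, mul_zero, neg_zero, zero_add]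
        rw [hsym i a, hsym i b]
        by_cases hic : i = c
        · subst hic; rw [hac', hbc']; ring
        · rw [haleaf i hib hic, hbleaf i hia hic]; ring
  · simp [Ne.symm hac, Ne.symm hbc]
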